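/- arXiv:0811.3475 — 3 statements merged into one kernel-verified Lean document; each statement's English description precedes it below -/
import Mathlib

section
/- In a directed multigraph with distinct nonadjacent vertices s and t, every minimal s,t-vertex cut A equals tail([S, S̄]) for some s,t-edge cut [S, S̄] with s ∉ tail([S, S̄]). -/
/-!
Let `S` consist of `A` together with the vertices reachable from `s` in `G − A`. An edge leaving
`S` cannot start at a reachable vertex (its head would be in `A` or reachable as well), so
`tail([S, S̄]) ⊆ A`. Every `s,t`-walk leaves `S` along an edge of `[S, S̄]`, so `tail([S, S̄])` is
itself an `s,t`-vertex cut, and minimality of `A` forces equality.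
-/

/-- A directed multigraph on vertex type `V` with edge type `E`. -/
structure Multigraph (V E : Type) where
  tail : E → V
  head : E → V

namespace Multigraph

variable {V E : Type}

/-- A (directed) walk from `s` to `t`: a nonempty list of edges, consecutive
edges compatible, starting at `s` and ending at `t`. -/
structure Walk (G : Multigraph V E) (s t : V) where
  edges : List E
  ne : edges ≠ []
  first : G.tail (edges.head ne) = s
  last : G.head (edges.getLast ne) = t
  chain : edges.Chain' fun e f => G.head e = G.tail f

namespace Walk

variable {G : Multigraph V E} {s t : V}

/-- The internal vertices of a walk: heads of all edges except the last. -/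
def internals (w : G.Walk s t) : Set V :=
  {v | ∃ e ∈ w.edges.dropLast, G.head e = v}

/-- All vertices visited by a walk. -/
def vertexSet (w : G.Walk s t) : Set V :=
  {v | v = s ∨ ∃ e ∈ w.edges, G.head e = v}

/-- The set of edges used by a walk. -/
def edgeSet (w : G.Walk s t) : Set E := {e | e ∈ w.edges}

/-- A walk is simple (a path) if it visits no vertex twice. -/
def IsSimple (w : G.Walk s t) : Prop := (s :: w.edges.map G.head).Nodup

end Walk

/-- There exist `n` pairwise internally-disjoint paths from `s` to `t`
(in a multigraph, parallel direct edges count as distinct internally-disjoint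
paths, so pairwise edge-disjointness is also required). -/
def HasIntDisjoint (G : Multigraph V E) (s t : V) (n : ℕ) : Prop :=
  ∃ P : Fin n → G.Walk s t, ∀ i j, i ≠ j →
    (P i).internals ∩ (P j).internals = ∅ ∧ (P i).edgeSet ∩ (P j).edgeSet = ∅

/-- There exist `n` pairwise edge-disjoint walks from `s` to `t`. -/
def HasEdgeDisjoint (G : Multigraph V E) (s t : V) (n : ℕ) : Prop :=
  ∃ P : Fin n → G.Walk s t, ∀ i j, i ≠ j →
    (P i).edgeSet ∩ (P j).edgeSet = ∅

/-- `A ⊆ V \ {s,t}` is an `s,t`-vertex cut: removing `A` destroys all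
walks from `s` to `t`, i.e. every walk from `s` to `t` meets `A`. -/
def IsVertexCut (G : Multigraph V E) (s t : V) (A : Set V) : Prop :=
  s ∉ A ∧ t ∉ A ∧ ∀ w : G.Walk s t, ∃ v ∈ w.vertexSet, v ∈ A

/-- There is no edge from `s` to `t`. -/
def Nonadjacent (G : Multigraph V E) (s t : V) : Prop :=
  ∀ e : E, ¬(G.tail e = s ∧ G.head e = t)

/-- The edge cut `[S, S̄]`: all edges with tail in `S` and head outside `S`. -/
def cutE (G : Multigraph V E) [Fintype E] [DecidableEq V] (S : Finset V) : Finset E :=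
  Finset.univ.filter fun e => G.tail e ∈ S ∧ G.head e ∉ S

/-- `tail([S, S̄])`: the set of tails of the edges in the cut `[S, S̄]`. -/
def tailSet (G : Multigraph V E) [Fintype E] [DecidableEq V] (S : Finset V) : Finset V :=
  (G.cutE S).image G.tail

/-- The parents of a vertex `v`. -/
def parents (G : Multigraph V E) (v : V) : Set V :=
  {u | ∃ e : E, G.tail e = u ∧ G.head e = v}

/-- The in-degree of a vertex: number of edges entering it. -/
def indeg (G : Multigraph V E) [Fintype E] [DecidableEq V] (t : V) : ℕ :=
  (Finset.univ.filter fun e => G.head e = t).card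

/-- The diversity `d(v) = |Γ⁻(v) \ {s}| + |[s,v]|` of a vertex `v`
with respect to the source `s`. -/
def diversity (G : Multigraph V E) [Fintype V] [Fintype E] [DecidableEq V]
    (s v : V) : ℕ :=
  (Finset.univ.filter fun u => u ≠ s ∧ ∃ e : E, G.tail e = u ∧ G.head e = v).card +
  (Finset.univ.filter fun e : E => G.tail e = s ∧ G.head e = v).card

/-- A multigraph is acyclic if it has no closed walk. -/
def Acyclic (G : Multigraph V E) : Prop := ∀ v : V, IsEmpty (G.Walk v v)

/-- The broadcast transformation with source `s`: every vertex `u ≠ s` is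
split into `u → u⁺`, all edges into `u` are kept, and every edge out of
`u` is redirected to originate from `u⁺` (edges out of `s` are unchanged). -/
def broadcast (G : Multigraph V E) (s : V) [DecidableEq V] :
    Multigraph (V ⊕ {u : V // u ≠ s}) (E ⊕ {u : V // u ≠ s}) where
  tail := fun x => match x with
    | Sum.inl e => if h : G.tail e = s then Sum.inl s else Sum.inr ⟨G.tail e, h⟩
    | Sum.inr u => Sum.inl u.1
  head := fun x => match x with
    | Sum.inl e => Sum.inl (G.head e)
    | Sum.inr u => Sum.inr u

/-- `hw` is the walk in the broadcast transformation corresponding to `w`: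
the original edges appearing along `hw`, in order, are exactly those of `w`. -/
def Corresponds [DecidableEq V] {G : Multigraph V E} {s t : V} (w : G.Walk s t)
    (hw : (G.broadcast s).Walk (Sum.inl s) (Sum.inl t)) : Prop :=
  hw.edges.filterMap (Sum.elim some (fun _ => none)) = w.edges

/-- `v` is reachable from `s` by a walk avoiding the vertex set `A`
(in the graph `G − A`). -/
def ReachAvoid (G : Multigraph V E) (A : Set V) (s v : V) : Prop :=
  v = s ∨ ∃ w : G.Walk s v, ∀ x ∈ w.vertexSet, x ∉ A

end Multigraph

namespace Multigraph

variable {V E : Type} {G : Multigraph V E}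

section EdgeLists

variable {x : E} {l : List E}

lemma tail_eq_or_exists_head_eq_of_isChain (hc : (x :: l).IsChain fun e f => G.head e = G.tail f)
    {e : E} (he : e ∈ x :: l) : G.tail e = G.tail x ∨ ∃ f ∈ x :: l, G.head f = G.tail e := by
  induction l generalizing x with
  | nil => exact Or.inl (by rw [List.mem_singleton.1 he])
  | cons y l ih =>
    rw [List.isChain_cons_cons] at hc
    rcases List.mem_cons.1 he with rfl | he
    · exact Or.inl rfl
    · rcases ih hc.2 he with h | ⟨f, hf, hfe⟩
      · exact Or.inr ⟨x, List.mem_cons_self, hc.1.trans h.symm⟩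
      · exact Or.inr ⟨f, List.mem_cons_of_mem x hf, hfe⟩

lemma exists_tail_mem_head_notMem_of_isChain (hc : (x :: l).IsChain fun e f => G.head e = G.tail f)
    {S : Set V} (hx : G.tail x ∈ S) (hl : G.head ((x :: l).getLast (List.cons_ne_nil x l)) ∉ S) :
    ∃ e ∈ x :: l, G.tail e ∈ S ∧ G.head e ∉ S := by
  induction l generalizing x with
  | nil => exact ⟨x, List.mem_singleton_self x, hx, hl⟩
  | cons y l ih =>
    rw [List.isChain_cons_cons] at hc
    by_cases hxS : G.head x ∈ S
    · obtain ⟨e, he, hes⟩ := ih hc.2 (hc.1 ▸ hxS) (by simpa using hl)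
      exact ⟨e, List.mem_cons_of_mem x he, hes⟩
    · exact ⟨x, List.mem_cons_self, hx, hxS⟩

end EdgeLists

namespace Walk

def single (e : E) {s : V} (h : G.tail e = s) : G.Walk s (G.head e) where
  edges := [e]
  ne := List.cons_ne_nil e []
  first := h
  last := rfl
  chain := List.isChain_singleton e

def snoc {s u : V} (w : G.Walk s u) (e : E) (h : G.tail e = u) : G.Walk s (G.head e) where
  edges := w.edges ++ [e]
  ne := by simp
  first := by rw [List.head_append_of_ne_nil w.ne]; exact w.first
  last := by simp
  chain := by
    show List.IsChain _ (w.edges ++ [e])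
    refine List.isChain_append.2 ⟨w.chain, List.isChain_singleton e, fun x hx y hy => ?_⟩
    rw [List.getLast?_eq_some_getLast w.ne, Option.mem_def, Option.some.injEq] at hx
    simp only [List.head?_cons, Option.mem_def, Option.some.injEq] at hy
    rw [← hx, ← hy, w.last, h]

variable {s t : V}

@[simp]
lemma mem_vertexSet_single (e : E) (h : G.tail e = s) {x : V} :
    x ∈ (single e h).vertexSet ↔ x = s ∨ x = G.head e := by
  simp [vertexSet, single, eq_comm]

@[simp]
lemma mem_vertexSet_snoc {u : V} (w : G.Walk s u) (e : E) (h : G.tail e = u) {x : V} :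
    x ∈ (w.snoc e h).vertexSet ↔ x ∈ w.vertexSet ∨ x = G.head e := by
  simp [vertexSet, snoc, or_assoc, eq_comm]

lemma tail_mem_vertexSet (w : G.Walk s t) {e : E} (he : e ∈ w.edges) :
    G.tail e ∈ w.vertexSet := by
  revert he
  obtain ⟨_ | ⟨x, l⟩, ne, first, -, chain⟩ := w
  · exact absurd rfl ne
  intro he
  rcases tail_eq_or_exists_head_eq_of_isChain chain he with h | h
  · exact Or.inl (h.trans first)
  · exact Or.inr h

lemma exists_mem_cutE [Fintype E] [DecidableEq V] (w : G.Walk s t) {S : Finset V}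
    (hs : s ∈ S) (ht : t ∉ S) : ∃ e ∈ w.edges, e ∈ G.cutE S := by
  obtain ⟨_ | ⟨x, l⟩, ne, first, last, chain⟩ := w
  · exact absurd rfl ne
  obtain ⟨e, he, hes⟩ := exists_tail_mem_head_notMem_of_isChain (S := (S : Set V)) chain
    (by rwa [← first] at hs) (by rwa [← last] at ht)
  exact ⟨e, he, by simpa [cutE] using hes⟩

end Walk

section Cuts

variable [Fintype E] [DecidableEq V] {s t : V} {S : Finset V}

lemma mem_of_mem_tailSet {v : V} (hv : v ∈ G.tailSet S) : v ∈ S := by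
  obtain ⟨e, he, rfl⟩ := Finset.mem_image.1 hv
  exact (Finset.mem_filter.1 he).2.1

lemma isVertexCut_tailSet (hs : s ∈ S) (ht : t ∉ S) (hsT : s ∉ G.tailSet S) :
    G.IsVertexCut s t (G.tailSet S) := by
  refine ⟨hsT, fun htT => ht (mem_of_mem_tailSet htT), fun w => ?_⟩
  obtain ⟨e, he, hcut⟩ := w.exists_mem_cutE hs ht
  exact ⟨G.tail e, w.tail_mem_vertexSet he, Finset.mem_image_of_mem _ hcut⟩

end Cuts

namespace ReachAvoid

variable {A : Set V} {s t u : V}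

lemma head (hs : s ∉ A) (hu : G.ReachAvoid A s u) {e : E} (he : G.tail e = u)
    (hA : G.head e ∉ A) : G.ReachAvoid A s (G.head e) := by
  refine Or.inr ?_
  rcases hu with rfl | ⟨w, hw⟩
  · refine ⟨Walk.single e he, ?_⟩
    rintro x hx
    rcases (Walk.mem_vertexSet_single e he).1 hx with rfl | rfl <;> assumption
  · refine ⟨w.snoc e he, ?_⟩
    rintro x hx
    rcases (w.mem_vertexSet_snoc e he).1 hx with hx | rfl
    exacts [hw x hx, hA]

lemma not_of_isVertexCut (hst : s ≠ t) (hA : G.IsVertexCut s t A) : ¬G.ReachAvoid A s t := by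
  rintro (rfl | ⟨w, hw⟩)
  · exact hst rfl
  · obtain ⟨v, hv, hvA⟩ := hA.2.2 w
    exact hw v hv hvA

end ReachAvoid

section SourceSide

variable [Fintype V] [DecidableEq V] {s t : V} {A : Finset V}

open Classical in
noncomputable def sourceSide (G : Multigraph V E) (A : Finset V) (s : V) : Finset V :=
  A ∪ Finset.univ.filter (G.ReachAvoid A s)

lemma mem_sourceSide {v : V} : v ∈ G.sourceSide A s ↔ v ∈ A ∨ G.ReachAvoid A s v := by
  simp [sourceSide]

lemma self_mem_sourceSide : s ∈ G.sourceSide A s :=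
  mem_sourceSide.2 (Or.inr (Or.inl rfl))

lemma notMem_sourceSide (hst : s ≠ t) (hA : G.IsVertexCut s t A) : t ∉ G.sourceSide A s :=
  fun ht => (mem_sourceSide.1 ht).elim hA.2.1 (ReachAvoid.not_of_isVertexCut hst hA)

lemma tailSet_sourceSide_subset [Fintype E] (hs : s ∉ A) : G.tailSet (G.sourceSide A s) ⊆ A := by
  intro v hv
  obtain ⟨e, he, rfl⟩ := Finset.mem_image.1 hv
  obtain ⟨htail, hhead⟩ := (Finset.mem_filter.1 he).2
  refine (mem_sourceSide.1 htail).resolve_right fun hreach => hhead (mem_sourceSide.2 ?_)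
  by_cases hA : G.head e ∈ A
  exacts [Or.inl hA, Or.inr (hreach.head (by simpa) rfl (by simpa))]

end SourceSide

end Multigraph

theorem stmt1_general {V E : Type} [Fintype V] [Fintype E] [DecidableEq V]
    (G : Multigraph V E) (s t : V) (hst : s ≠ t)
    (A : Finset V) (hcut : G.IsVertexCut s t ↑A)
    (hmin : ∀ B : Finset V, B ⊆ A → G.IsVertexCut s t ↑B → B = A) :
    ∃ S : Finset V, s ∈ S ∧ t ∉ S ∧ s ∉ G.tailSet S ∧ A = G.tailSet S := by
  have hsub : G.tailSet (G.sourceSide A s) ⊆ A := G.tailSet_sourceSide_subset hcut.1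
  have hs : s ∈ G.sourceSide A s := Multigraph.self_mem_sourceSide
  have ht : t ∉ G.sourceSide A s := Multigraph.notMem_sourceSide hst hcut
  have hsT : s ∉ G.tailSet (G.sourceSide A s) := fun h => hcut.1 (hsub h)
  exact ⟨_, hs, ht, hsT, (hmin _ hsub (Multigraph.isVertexCut_tailSet hs ht hsT)).symm⟩

/-- Every minimal `s,t`-vertex cut `A` equals `tail([S,S̄])` for
some `s,t`-edge cut `[S,S̄]` with `s ∉ tail([S,S̄])`. -/
theorem stmt1 {V E : Type} [Fintype V] [Fintype E] [DecidableEq V]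
    (G : Multigraph V E) (s t : V) (hst : s ≠ t) (hna : G.Nonadjacent s t)
    (A : Finset V) (hcut : G.IsVertexCut s t ↑A)
    (hmin : ∀ B : Finset V, B ⊆ A → G.IsVertexCut s t ↑B → B = A) :
    ∃ S : Finset V, s ∈ S ∧ t ∉ S ∧ s ∉ G.tailSet S ∧ A = G.tailSet S :=
  stmt1_general G s t hst A hcut hmin
end

section
/- Let G be a finite directed acyclic multigraph with source s in which every vertex v ≠ s has diversity d(v) ≥ d, and suppose some vertex t ≠ s has in-degree exactly d. Then the minimum size of an s,t-edge cut equals d, and the maximum number of pairwise internally-disjoint s-to-t paths equals d. -/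
/-!
Splitting every vertex `u ≠ s` into an edge `u → u⁺` (the broadcast transformation) turns
internally disjoint `s,t`-paths of `G` into edge-disjoint ones. In the broadcast graph every
`s,t`-cut has at least `d` edges: the topologically first vertex `v` on the sink side has all its
parents on the source side, and each parent `u ≠ s` of `v` (through `u → u⁺` or through an edge
`u⁺ → v`) as well as each edge `s → v` contributes its own edge to the cut, so the cut has at
least `d(v) ≥ d` edges. The edge version of Menger's theorem, proved by augmenting paths and
decomposition of an integral flow, then yields `d` internally disjoint paths in `G`. Conversely,
edge-disjoint paths cross every cut in distinct edges, and the cut `V ∖ {t}` consists of the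
`d` edges entering `t`.
-/

namespace Multigraph

variable {V E : Type} {G : Multigraph V E}

def IsWalkList (G : Multigraph V E) : V → List E → V → Prop
  | a, [], b => a = b
  | a, e :: l, b => G.tail e = a ∧ G.IsWalkList (G.head e) l b

theorem isWalkList_append {a c : V} {l₁ l₂ : List E} :
    G.IsWalkList a (l₁ ++ l₂) c ↔ ∃ b, G.IsWalkList a l₁ b ∧ G.IsWalkList b l₂ c := by
  induction l₁ generalizing a with
  | nil => exact ⟨fun h => ⟨a, rfl, h⟩, fun ⟨_, rfl, h⟩ => h⟩
  | cons e l ih => simp [IsWalkList, ih, and_assoc]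

theorem IsWalkList.concat {a b : V} {l : List E} {e : E} (h : G.IsWalkList a l b)
    (he : G.tail e = b) : G.IsWalkList a (l ++ [e]) (G.head e) :=
  isWalkList_append.2 ⟨b, h, he, rfl⟩

theorem isWalkList_iff {a b : V} :
    ∀ {l : List E} (hne : l ≠ []), G.IsWalkList a l b ↔ G.tail (l.head hne) = a ∧
      G.head (l.getLast hne) = b ∧ l.IsChain fun e f => G.head e = G.tail f
  | [e], _ => by simp [IsWalkList]
  | e :: f :: l, _ => by
      rw [IsWalkList, isWalkList_iff (l := f :: l) (List.cons_ne_nil _ _)]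
      simp only [List.head_cons, List.getLast_cons_cons, List.isChain_cons_cons]
      grind

theorem Walk.isWalkList {s t : V} (w : G.Walk s t) : G.IsWalkList s w.edges t :=
  (isWalkList_iff w.ne).2 ⟨w.first, w.last, w.chain⟩

def Walk.ofList {s t : V} (l : List E) (hne : l ≠ []) (h : G.IsWalkList s l t) : G.Walk s t :=
  ⟨l, hne, ((isWalkList_iff hne).1 h).1, ((isWalkList_iff hne).1 h).2.1,
    ((isWalkList_iff hne).1 h).2.2⟩

theorem IsWalkList.exists_crossing {a b : V} {S : Set V} :
    ∀ {l : List E}, G.IsWalkList a l b → a ∈ S → b ∉ S →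
      ∃ e ∈ l, G.tail e ∈ S ∧ G.head e ∉ S
  | [], h, ha, hb => absurd (h ▸ ha) hb
  | e :: l, ⟨he, hl⟩, ha, hb => by
      by_cases hm : G.head e ∈ S
      · obtain ⟨f, hf, hfS⟩ := hl.exists_crossing hm hb
        exact ⟨f, List.mem_cons_of_mem e hf, hfS⟩
      · exact ⟨e, List.mem_cons_self, he ▸ ha, hm⟩

theorem IsWalkList.exists_nodup_sublist {b : V} :
    ∀ {a : V} {l : List E}, G.IsWalkList a l b →
      ∃ l' : List E, l'.Sublist l ∧ G.IsWalkList a l' b ∧ (a :: l'.map G.head).Nodup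
  | a, [], h => ⟨[], .refl _, h, List.nodup_singleton a⟩
  | a, e :: l, ⟨he, hl⟩ => by
      obtain ⟨l', hsub, hl', hnd⟩ := hl.exists_nodup_sublist
      by_cases ha : a ∈ G.head e :: l'.map G.head
      · rcases List.mem_cons.1 ha with rfl | ha
        · exact ⟨l', hsub.cons e, hl', hnd⟩
        obtain ⟨f, hf, rfl⟩ := List.mem_map.1 ha
        obtain ⟨m₁, m₂, rfl⟩ := List.append_of_mem hf
        obtain ⟨c, -, hc⟩ := isWalkList_append.1 hl'
        have hsub' : m₂.Sublist (e :: l) :=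
          ((List.sublist_cons_self f m₂).trans (List.sublist_append_right _ _)).trans (hsub.cons e)
        refine ⟨m₂, hsub', hc.2, ?_⟩
        have := (List.nodup_cons.1 hnd).2
        rw [List.map_append, List.map_cons] at this
        exact this.sublist (List.sublist_append_right _ _)
      · exact ⟨e :: l', hsub.cons_cons e, ⟨he, hl'⟩, List.nodup_cons.2 ⟨ha, hnd⟩⟩

theorem IsWalkList.eq_nil_of_acyclic (hG : G.Acyclic) {v : V} {l : List E}
    (h : G.IsWalkList v l v) : l = [] := by
  by_contra hne
  exact (hG v).false (Walk.ofList l hne h)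

theorem IsWalkList.notMem_map_head (hG : G.Acyclic) {a b : V} {l : List E}
    (h : G.IsWalkList a l b) : a ∉ l.map G.head := by
  intro ha
  obtain ⟨e, he, rfl⟩ := List.mem_map.1 ha
  obtain ⟨m₁, m₂, rfl⟩ := List.append_of_mem he
  obtain ⟨c, h₁, h₂⟩ := isWalkList_append.1 h
  have := (h₁.concat h₂.1).eq_nil_of_acyclic hG
  simp at this

theorem IsWalkList.nodup_map_head (hG : G.Acyclic) :
    ∀ {a b : V} {l : List E}, G.IsWalkList a l b → (l.map G.head).Nodup
  | _, _, [], _ => List.nodup_nil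
  | _, _, _ :: _, ⟨_, hl⟩ => List.nodup_cons.2 ⟨hl.notMem_map_head hG, hl.nodup_map_head hG⟩

theorem exists_isWalkList_of_transGen {a b : V}
    (h : Relation.TransGen (fun u v => u ∈ G.parents v) a b) :
    ∃ l : List E, l ≠ [] ∧ G.IsWalkList a l b := by
  induction h with
  | single h =>
      obtain ⟨e, he, rfl⟩ := h
      exact ⟨[e], List.cons_ne_nil _ _, he, rfl⟩
  | tail _ h ih =>
      obtain ⟨l, hne, hl⟩ := ih
      obtain ⟨e, he, rfl⟩ := h
      exact ⟨l ++ [e], by simp, hl.concat he⟩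

theorem not_transGen_parents_self (hG : G.Acyclic) (v : V) :
    ¬ Relation.TransGen (fun u v => u ∈ G.parents v) v v := fun h => by
  obtain ⟨l, hne, hl⟩ := exists_isWalkList_of_transGen h
  exact hne (hl.eq_nil_of_acyclic hG)

theorem wellFounded_parents [Finite V] (hG : G.Acyclic) :
    WellFounded fun u v => u ∈ G.parents v :=
  have : Std.Irrefl (Relation.TransGen fun u v => u ∈ G.parents v) :=
    ⟨not_transGen_parents_self hG⟩
  Subrelation.wf (Relation.TransGen.single (r := fun u v => u ∈ G.parents v))
    (Finite.wellFounded_of_trans_of_irrefl _)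

theorem wellFounded_flip_parents [Finite V] (hG : G.Acyclic) :
    WellFounded (flip fun u v => u ∈ G.parents v) :=
  have : Std.Irrefl (Relation.TransGen (flip fun u v => u ∈ G.parents v)) :=
    ⟨fun v h => not_transGen_parents_self hG v (Relation.transGen_swap.1 h)⟩
  Subrelation.wf (Relation.TransGen.single (r := flip fun u v => u ∈ G.parents v))
    (Finite.wellFounded_of_trans_of_irrefl _)

theorem HasIntDisjoint.hasEdgeDisjoint {s t : V} {n : ℕ} (h : G.HasIntDisjoint s t n) :
    G.HasEdgeDisjoint s t n :=
  let ⟨P, hP⟩ := h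
  ⟨P, fun i j hij => (hP i j hij).2⟩

section Cuts

variable [Fintype E] [DecidableEq V]

@[simp]
theorem mem_cutE {S : Finset V} {e : E} : e ∈ G.cutE S ↔ G.tail e ∈ S ∧ G.head e ∉ S := by
  simp [cutE]

theorem HasEdgeDisjoint.le_card_cutE {s t : V} {n : ℕ} (h : G.HasEdgeDisjoint s t n)
    {S : Finset V} (hs : s ∈ S) (ht : t ∉ S) : n ≤ (G.cutE S).card := by
  obtain ⟨P, hP⟩ := h
  choose e he hcut using fun i => (P i).isWalkList.exists_crossing (S := ↑S) hs ht
  have hinj : Function.Injective e := fun i j hij => by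
    by_contra hne
    exact (hP i j hne).subset ⟨he i, hij ▸ he j⟩
  simpa using Finset.card_le_card_of_injOn (s := Finset.univ) e
    (fun i _ => mem_cutE.2 (hcut i)) hinj.injOn

theorem cutE_univ_erase [Fintype V] (hG : G.Acyclic) (t : V) :
    G.cutE (Finset.univ.erase t) = Finset.univ.filter fun e => G.head e = t := by
  ext e
  have hloop : G.head e = t → G.tail e ≠ t := fun h₁ h₂ =>
    List.cons_ne_nil e [] (IsWalkList.eq_nil_of_acyclic hG (v := t) ⟨h₂, h₁⟩)
  simp only [mem_cutE, Finset.mem_erase, Finset.mem_univ, and_true, not_not,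
    Finset.mem_filter, true_and]
  exact ⟨And.right, fun h => ⟨hloop h, h⟩⟩

end Cuts

def bidirected (G : Multigraph V E) : Multigraph V (E × Bool) where
  tail p := if p.2 then G.tail p.1 else G.head p.1
  head p := if p.2 then G.head p.1 else G.tail p.1

-- Residual steps: forward along an edge outside `F`, backward along an edge of `F`.
def IsResidual (F : Finset E) (p : E × Bool) : Prop := p.1 ∈ F ↔ p.2 = false

theorem IsWalkList.nodup_map_fst_of_bidirected :
    ∀ {a b : V} {l : List (E × Bool)}, G.bidirected.IsWalkList a l b →
      (a :: l.map G.bidirected.head).Nodup → (l.map Prod.fst).Nodup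
  | _, _, [], _, _ => List.nodup_nil
  | a, _, p :: l, ⟨hp, hl⟩, hnd => by
      obtain ⟨ha, hnd⟩ := List.nodup_cons.1 hnd
      obtain ⟨hpl, -⟩ := List.nodup_cons.1 hnd
      refine List.nodup_cons.2 ⟨fun hmem => ?_, hl.nodup_map_fst_of_bidirected hnd⟩
      obtain ⟨q, hq, hqp⟩ := List.mem_map.1 hmem
      have hq' : G.bidirected.head q = a ∨ G.bidirected.head q = G.bidirected.head p := by
        rw [← hp]
        rcases q with ⟨e, _ | _⟩ <;> rcases p with ⟨f, _ | _⟩ <;> simp_all [bidirected]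
      rcases hq' with h | h
      · exact ha (List.mem_cons_of_mem _ (h ▸ List.mem_map_of_mem hq))
      · exact hpl (h ▸ List.mem_map_of_mem hq)

theorem IsWalkList.bidirected_reverse :
    ∀ {a b : V} {l : List E}, G.IsWalkList a l b →
      G.bidirected.IsWalkList b (l.reverse.map (·, false)) a
  | _, _, [], h => h.symm
  | _, _, e :: _, ⟨he, hl⟩ => by
      rw [List.reverse_cons, List.map_append]
      exact isWalkList_append.2 ⟨G.head e, hl.bidirected_reverse, by simp [bidirected],
        by simpa [bidirected, IsWalkList] using he⟩

section Flow

variable [DecidableEq V]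

open scoped symmDiff

def excess (G : Multigraph V E) (F : Finset E) (v : V) : ℤ :=
  ∑ e ∈ F, ((if G.head e = v then 1 else 0) - (if G.tail e = v then 1 else 0))

def IsFlow (G : Multigraph V E) (s t : V) (F : Finset E) : Prop :=
  ∀ v, v ≠ s → v ≠ t → G.excess F v = 0

theorem exists_mem_tail_eq_of_excess_lt {F : Finset E} {v : V}
    (h : G.excess F v < (F.filter fun e => G.head e = v).card) : ∃ e ∈ F, G.tail e = v := by
  by_contra! hout
  refine h.ne ?_
  rw [excess, Finset.card_filter, Nat.cast_sum]
  refine Finset.sum_congr rfl fun e he => ?_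
  simp [hout e he]

theorem sum_excess (F : Finset E) (S : Finset V) :
    ∑ v ∈ S, G.excess F v =
      ∑ e ∈ F, ((if G.head e ∈ S then 1 else 0) - (if G.tail e ∈ S then 1 else 0)) := by
  unfold excess
  rw [Finset.sum_comm]
  simp [Finset.sum_sub_distrib]

theorem IsFlow.neg_excess_eq_card_cutE [Fintype E] {s t : V} {F : Finset E}
    (hF : G.IsFlow s t F) {S : Finset V} (hs : s ∈ S) (ht : t ∉ S)
    (hout : ∀ e, G.tail e ∈ S → G.head e ∉ S → e ∈ F)
    (hin : ∀ e ∈ F, G.head e ∈ S → G.tail e ∈ S) :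
    -G.excess F s = (G.cutE S).card := by
  have hsum : ∑ v ∈ S, G.excess F v = G.excess F s :=
    Finset.sum_eq_single_of_mem s hs fun v hv hvs => hF v hvs (ne_of_mem_of_not_mem hv ht)
  have hcut : F.filter (fun e => G.tail e ∈ S ∧ G.head e ∉ S) = G.cutE S := by
    ext e
    simp only [Finset.mem_filter, mem_cutE, and_iff_right_iff_imp]
    exact fun h => hout e h.1 h.2
  rw [← hsum, sum_excess, ← hcut, Finset.card_filter, Nat.cast_sum, ← Finset.sum_neg_distrib]
  refine Finset.sum_congr rfl fun e he => ?_
  have := hin e he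
  by_cases h₁ : G.tail e ∈ S <;> by_cases h₂ : G.head e ∈ S <;> simp_all

theorem IsFlow.exists_walk [Finite V] (hG : G.Acyclic) {s t : V} {F : Finset E}
    (hF : G.IsFlow s t F) (hts : t ≠ s) (hval : 0 < -G.excess F s) :
    ∃ w : G.Walk s t, ∀ e ∈ w.edges, e ∈ F := by
  -- follow `F` from `s` to a topologically last vertex; conservation forces it to be `t`
  obtain ⟨v, ⟨l, hl, hlF⟩, hmax⟩ := (wellFounded_flip_parents hG).has_min
    {v | ∃ l, G.IsWalkList s l v ∧ ∀ e ∈ l, e ∈ F} ⟨s, [], rfl, by simp⟩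
  by_cases hvt : v = t
  · subst hvt
    have hne : l ≠ [] := by rintro rfl; exact hts hl.symm
    exact ⟨Walk.ofList l hne hl, hlF⟩
  have hlt : G.excess F v < (F.filter fun e => G.head e = v).card := by
    by_cases hvs : v = s
    · subst hvs
      linarith [(F.filter fun e => G.head e = v).card.cast_nonneg (α := ℤ)]
    · have hne : l ≠ [] := by rintro rfl; exact hvs hl.symm
      rw [hF v hvs hvt]
      exact_mod_cast Finset.card_pos.2 ⟨l.getLast hne, Finset.mem_filter.2
        ⟨hlF _ (List.getLast_mem hne), ((isWalkList_iff hne).1 hl).2.1⟩⟩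
  obtain ⟨e, he, hev⟩ := exists_mem_tail_eq_of_excess_lt hlt
  refine absurd ⟨e, hev, rfl⟩ (hmax (G.head e) ⟨l ++ [e], hl.concat hev, fun f hf => ?_⟩)
  rcases List.mem_append.1 hf with hf | hf
  · exact hlF f hf
  · exact List.mem_singleton.1 hf ▸ he

variable [DecidableEq E]

theorem excess_insert {F : Finset E} {e : E} (he : e ∉ F) (v : V) :
    G.excess (insert e F) v = G.excess F v + (if G.head e = v then 1 else 0) -
      (if G.tail e = v then 1 else 0) := by
  rw [excess, excess, Finset.sum_insert he]
  ring

theorem excess_symmDiff_singleton {F : Finset E} {p : E × Bool} (hp : IsResidual F p) (v : V) :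
    G.excess (F ∆ {p.1}) v = G.excess F v + (if G.bidirected.head p = v then 1 else 0) -
      (if G.bidirected.tail p = v then 1 else 0) := by
  obtain ⟨e, _ | _⟩ := p
  · have he : e ∈ F := hp.2 rfl
    have hF : F ∆ {e} = F.erase e := by
      ext x
      by_cases x = e <;> simp_all [Finset.mem_symmDiff]
    have := excess_insert (G := G) (Finset.notMem_erase e F) v
    rw [Finset.insert_erase he] at this
    rw [hF, this]
    simp only [bidirected, Bool.false_eq_true, ↓reduceIte]
    ring
  · have he : e ∉ F := fun h => by simpa using hp.1 h
    have hF : F ∆ {e} = insert e F := by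
      ext x
      by_cases x = e <;> simp_all [Finset.mem_symmDiff]
    rw [hF, excess_insert he]
    simp only [bidirected, ↓reduceIte]

theorem IsWalkList.excess_symmDiff :
    ∀ {F : Finset E} {a b : V} {l : List (E × Bool)}, G.bidirected.IsWalkList a l b →
      (∀ p ∈ l, IsResidual F p) → (l.map Prod.fst).Nodup → ∀ v,
      G.excess (F ∆ (l.map Prod.fst).toFinset) v =
        G.excess F v + (if b = v then 1 else 0) - (if a = v then 1 else 0)
  | F, a, b, [], h, _, _, v => by
      cases h
      simp [← Finset.bot_eq_empty]
  | F, a, b, p :: l, ⟨hp, hl⟩, hres, hnd, v => by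
      have hp1 : p.1 ∉ l.map Prod.fst := (List.nodup_cons.1 hnd).1
      have hF : F ∆ ((p :: l).map Prod.fst).toFinset =
          (F ∆ {p.1}) ∆ (l.map Prod.fst).toFinset := by
        ext x
        by_cases x = p.1 <;> simp_all [Finset.mem_symmDiff]
      have hres' : ∀ q ∈ l, IsResidual (F ∆ {p.1}) q := fun q hq => by
        have hq1 : q.1 ≠ p.1 := fun h => hp1 (h ▸ List.mem_map_of_mem hq)
        simpa [IsResidual, Finset.mem_symmDiff, hq1] using hres q (List.mem_cons_of_mem p hq)
      rw [hF, hl.excess_symmDiff hres' (List.nodup_cons.1 hnd).2,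
        excess_symmDiff_singleton (hres p List.mem_cons_self), hp]
      ring

theorem IsWalkList.excess_sdiff {F : Finset E} {a b : V} {l : List E} (hl : G.IsWalkList a l b)
    (hnd : l.Nodup) (hF : ∀ e ∈ l, e ∈ F) (v : V) :
    G.excess (F \ l.toFinset) v =
      G.excess F v + (if a = v then 1 else 0) - (if b = v then 1 else 0) := by
  -- deleting the edges of a walk is augmenting along its reversal
  have hres : ∀ p ∈ l.reverse.map (·, false), IsResidual F p := by
    simpa [IsResidual] using fun e he => hF e he
  have key := hl.bidirected_reverse.excess_symmDiff hres
    (by simpa [List.map_map, Function.comp_def]) v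
  have hsub : l.toFinset ≤ F := fun e he => hF e (List.mem_toFinset.1 he)
  simpa [List.map_map, Function.comp_def, symmDiff_of_ge hsub] using key

theorem IsFlow.exists_neg_excess_eq_add_one {s t : V} {F : Finset E} (hF : G.IsFlow s t F)
    (hts : t ≠ s) {l : List (E × Bool)} (hl : G.bidirected.IsWalkList s l t)
    (hres : ∀ p ∈ l, IsResidual F p) :
    ∃ F', G.IsFlow s t F' ∧ -G.excess F' s = -G.excess F s + 1 := by
  obtain ⟨l', hsub, hl', hnd⟩ := hl.exists_nodup_sublist
  have key := hl'.excess_symmDiff (fun p hp => hres p (hsub.subset hp))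
    (hl'.nodup_map_fst_of_bidirected hnd)
  refine ⟨F ∆ (l'.map Prod.fst).toFinset, fun v hvs hvt => ?_, ?_⟩
  · simp [key, hF v hvs hvt, Ne.symm hvs, Ne.symm hvt]
  · simp only [key, hts, ↓reduceIte, add_zero, neg_sub]
    ring

theorem exists_flow_le_neg_excess [Fintype V] [Fintype E] {s t : V} (hts : t ≠ s) {d : ℕ}
    (hcut : ∀ S : Finset V, s ∈ S → t ∉ S → d ≤ (G.cutE S).card) :
    ∃ F : Finset E, G.IsFlow s t F ∧ (d : ℤ) ≤ -G.excess F s := by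
  classical
  -- a maximum flow leaves `t` residually unreachable, and the residually reachable set is then
  -- a cut all of whose edges lie in `F`
  obtain ⟨F, hFmem, hmax⟩ := Finset.exists_max_image (Finset.univ.filter (G.IsFlow s t))
    (fun F => -G.excess F s) ⟨∅, by simp [IsFlow, excess]⟩
  have hF : G.IsFlow s t F := (Finset.mem_filter.1 hFmem).2
  refine ⟨F, hF, ?_⟩
  let S : Finset V := Finset.univ.filter fun v =>
    ∃ l, G.bidirected.IsWalkList s l v ∧ ∀ p ∈ l, IsResidual F p
  have hs : s ∈ S := Finset.mem_filter.2 ⟨Finset.mem_univ _, [], rfl, by simp⟩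
  have hstep (p : E × Bool) (hp : IsResidual F p) (hS : G.bidirected.tail p ∈ S) :
      G.bidirected.head p ∈ S := by
    obtain ⟨l, hl, hres⟩ := (Finset.mem_filter.1 hS).2
    refine Finset.mem_filter.2 ⟨Finset.mem_univ _, l ++ [p], hl.concat rfl, fun q hq => ?_⟩
    rcases List.mem_append.1 hq with hq | hq
    · exact hres q hq
    · exact List.mem_singleton.1 hq ▸ hp
  have ht : t ∉ S := fun ht => by
    obtain ⟨l, hl, hres⟩ := (Finset.mem_filter.1 ht).2
    obtain ⟨F', hF', hval⟩ := hF.exists_neg_excess_eq_add_one hts hl hres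
    linarith [hmax F' (Finset.mem_filter.2 ⟨Finset.mem_univ _, hF'⟩)]
  rw [hF.neg_excess_eq_card_cutE hs ht]
  · exact_mod_cast hcut S hs ht
  · intro e he₁ he₂
    by_contra he
    exact he₂ (by simpa [bidirected] using hstep (e, true) (by simp [IsResidual, he]) he₁)
  · intro e he he₁
    by_contra he₂
    exact he₂ (by simpa [bidirected] using hstep (e, false) (by simp [IsResidual, he]) he₁)

theorem IsFlow.sdiff_walk (hG : G.Acyclic) {s t : V} {F : Finset E} (hF : G.IsFlow s t F)
    (hts : t ≠ s) (w : G.Walk s t) (hw : ∀ e ∈ w.edges, e ∈ F) :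
    G.IsFlow s t (F \ w.edges.toFinset) ∧
      -G.excess (F \ w.edges.toFinset) s = -G.excess F s - 1 := by
  have key := w.isWalkList.excess_sdiff ((w.isWalkList.nodup_map_head hG).of_map _) hw
  refine ⟨fun v hvs hvt => ?_, ?_⟩
  · simp [key, hF v hvs hvt, Ne.symm hvs, Ne.symm hvt]
  · simp only [key, ↓reduceIte, hts, sub_zero, neg_add_rev]
    ring

theorem IsFlow.exists_edgeDisjoint [Finite V] (hG : G.Acyclic) {s t : V} (hts : t ≠ s) :
    ∀ (d : ℕ) {F : Finset E}, G.IsFlow s t F → (d : ℤ) ≤ -G.excess F s →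
      ∃ P : Fin d → G.Walk s t, (∀ i, ∀ e ∈ (P i).edges, e ∈ F) ∧
        ∀ i j, i ≠ j → (P i).edgeSet ∩ (P j).edgeSet = ∅
  | 0, _, _, _ => ⟨Fin.elim0, fun i => i.elim0, fun i => i.elim0⟩
  | d + 1, F, hF, hval => by
      obtain ⟨w, hw⟩ := hF.exists_walk hG hts (by push_cast at hval; linarith)
      obtain ⟨hF', hval'⟩ := hF.sdiff_walk hG hts w hw
      obtain ⟨P, hPF, hP⟩ := exists_edgeDisjoint hG hts d hF' (by push_cast at hval; linarith)
      have hdisj (i : Fin d) (e : E) (he : e ∈ (P i).edges) : e ∉ w.edges := fun hew =>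
        (Finset.mem_sdiff.1 (hPF i e he)).2 (List.mem_toFinset.2 hew)
      refine ⟨Fin.cons w P, Fin.cases hw fun i e he => (Finset.mem_sdiff.1 (hPF i e he)).1,
        fun i j hij => Set.eq_empty_iff_forall_notMem.2 fun e ⟨hi, hj⟩ => ?_⟩
      induction i using Fin.cases <;> induction j using Fin.cases
      · exact hij rfl
      · exact hdisj _ e (by simpa [Walk.edgeSet] using hj) (by simpa [Walk.edgeSet] using hi)
      · exact hdisj _ e (by simpa [Walk.edgeSet] using hi) (by simpa [Walk.edgeSet] using hj)
      · exact (hP _ _ fun h => hij (congrArg Fin.succ h)).subset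
          ⟨by simpa using hi, by simpa using hj⟩

end Flow

theorem hasEdgeDisjoint_of_le_card_cutE [Fintype V] [Fintype E] [DecidableEq V]
    (hG : G.Acyclic) {s t : V} (hts : t ≠ s) {d : ℕ}
    (hcut : ∀ S : Finset V, s ∈ S → t ∉ S → d ≤ (G.cutE S).card) :
    G.HasEdgeDisjoint s t d := by
  classical
  obtain ⟨F, hF, hval⟩ := exists_flow_le_neg_excess hts hcut
  obtain ⟨P, -, hP⟩ := hF.exists_edgeDisjoint hG hts d hval
  exact ⟨P, hP⟩

section Broadcast

variable [DecidableEq V] {s : V}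

@[simp]
theorem broadcast_head_inl (e : E) : (G.broadcast s).head (.inl e) = .inl (G.head e) := rfl

@[simp]
theorem broadcast_head_inr (u : {u : V // u ≠ s}) : (G.broadcast s).head (.inr u) = .inr u := rfl

@[simp]
theorem broadcast_tail_inr (u : {u : V // u ≠ s}) : (G.broadcast s).tail (.inr u) = .inl u.1 :=
  rfl

theorem broadcast_tail_inl_of_eq {e : E} (h : G.tail e = s) :
    (G.broadcast s).tail (.inl e) = .inl s := by
  simp [broadcast, h]

theorem broadcast_tail_inl_of_ne {e : E} (h : G.tail e ≠ s) :
    (G.broadcast s).tail (.inl e) = .inr ⟨G.tail e, h⟩ := by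
  simp [broadcast, h]

theorem IsWalkList.filterMap_getLeft :
    ∀ {x y : V ⊕ {u : V // u ≠ s}} {L : List (E ⊕ {u : V // u ≠ s})},
      (G.broadcast s).IsWalkList x L y →
      G.IsWalkList (Sum.elim id Subtype.val x) (L.filterMap Sum.getLeft?)
        (Sum.elim id Subtype.val y)
  | _, _, [], h => h ▸ rfl
  | _, _, .inl e :: _, ⟨he, hL⟩ => by
      refine ⟨?_, hL.filterMap_getLeft⟩
      by_cases hs : G.tail e = s
      · simp [← he, broadcast_tail_inl_of_eq hs, hs]
      · simp [← he, broadcast_tail_inl_of_ne hs]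
  | _, _, .inr _ :: _, ⟨hu, hL⟩ => by
      rw [List.filterMap_cons_none rfl, ← hu]
      exact hL.filterMap_getLeft

theorem broadcast_acyclic (hG : G.Acyclic) : (G.broadcast s).Acyclic := fun x => by
  refine ⟨fun w => ?_⟩
  -- `w` projects to a closed walk of `G`, so it uses split edges only, and these never chain
  have hright : ∀ a ∈ w.edges, ∃ u, a = .inr u := by
    have := List.filterMap_eq_nil_iff.1 (w.isWalkList.filterMap_getLeft.eq_nil_of_acyclic hG)
    rintro (e | u) ha
    · simpa using this _ ha
    · exact ⟨u, rfl⟩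
  obtain ⟨u, hu⟩ := hright _ (List.head_mem w.ne)
  obtain ⟨u', hu'⟩ := hright _ (List.getLast_mem w.ne)
  have h₁ := w.first
  have h₂ := w.last
  rw [hu, broadcast_tail_inr] at h₁
  rw [hu', broadcast_head_inr] at h₂
  exact Sum.inl_ne_inr (h₁.trans h₂.symm)

theorem Walk.filterMap_getLeft_ne_nil {x : V ⊕ {u : V // u ≠ s}} {t : V}
    (w : (G.broadcast s).Walk x (.inl t)) : w.edges.filterMap Sum.getLeft? ≠ [] := by
  intro h
  have hlast := w.last
  cases hl : w.edges.getLast w.ne with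
  | inl e => simpa [hl] using List.filterMap_eq_nil_iff.1 h _ (List.getLast_mem w.ne)
  | inr u => simp [hl] at hlast

def Walk.unbroadcast {t : V} (w : (G.broadcast s).Walk (.inl s) (.inl t)) : G.Walk s t :=
  Walk.ofList _ w.filterMap_getLeft_ne_nil w.isWalkList.filterMap_getLeft

theorem Walk.mem_unbroadcast_edges {t : V} {w : (G.broadcast s).Walk (.inl s) (.inl t)} {e : E} :
    e ∈ w.unbroadcast.edges ↔ .inl e ∈ w.edges := by
  simp [unbroadcast, ofList, List.mem_filterMap, Sum.getLeft?_eq_some_iff]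

theorem IsWalkList.inr_mem_of_mem_dropLast :
    ∀ {x y : V ⊕ {u : V // u ≠ s}} {L : List (E ⊕ {u : V // u ≠ s})},
      (G.broadcast s).IsWalkList x L y → ∀ e ∈ (L.filterMap Sum.getLeft?).dropLast,
      ∀ h : G.head e ≠ s, .inr ⟨G.head e, h⟩ ∈ L
  | _, _, [], _, e, he, _ => by simp at he
  | _, _, .inr _ :: _, ⟨_, hL⟩, e, he, h =>
      List.mem_cons_of_mem _
        (hL.inr_mem_of_mem_dropLast e (by rwa [List.filterMap_cons_none rfl] at he) h)
  -- after an original edge into `u ≠ s`, the next edge can only be the split edge `u → u⁺`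
  | _, _, .inl f :: L, ⟨_, hL⟩, e, he, h => by
      rw [List.filterMap_cons_some (f := Sum.getLeft?) (a := .inl f) rfl] at he
      rcases hm : L.filterMap Sum.getLeft? with _ | ⟨g, m⟩
      · simp [hm] at he
      rw [hm, List.dropLast_cons_cons] at he
      rcases List.mem_cons.1 he with rfl | he
      · obtain ⟨a, L', rfl⟩ := List.exists_cons_of_ne_nil (l := L) (by rintro rfl; simp at hm)
        obtain ⟨ha, -⟩ := hL
        rcases a with e' | u
        · by_cases hs : G.tail e' = s
          · rw [broadcast_tail_inl_of_eq hs, broadcast_head_inl, Sum.inl.injEq] at ha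
            exact absurd ha.symm h
          · rw [broadcast_tail_inl_of_ne hs] at ha
            exact absurd ha Sum.inr_ne_inl
        · simp only [broadcast_tail_inr, broadcast_head_inl, Sum.inl.injEq] at ha
          simp [← ha]
      · exact List.mem_cons_of_mem _ (hL.inr_mem_of_mem_dropLast e (hm ▸ he) h)

theorem Walk.mem_internals_unbroadcast (hG : G.Acyclic) {t : V}
    (w : (G.broadcast s).Walk (.inl s) (.inl t)) {v : V} (hv : v ∈ w.unbroadcast.internals) :
    ∃ h : v ≠ s, .inr ⟨v, h⟩ ∈ w.edges := by
  obtain ⟨e, he, rfl⟩ := hv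
  have hmem : G.head e ∈ w.unbroadcast.edges.map G.head :=
    List.mem_map_of_mem (List.dropLast_subset _ he)
  have hs : G.head e ≠ s := fun h =>
    w.unbroadcast.isWalkList.notMem_map_head hG (by rwa [h] at hmem)
  exact ⟨hs, w.isWalkList.inr_mem_of_mem_dropLast e he hs⟩

theorem le_card_cutE_broadcast [Fintype V] [Fintype E] (hG : G.Acyclic) {d : ℕ}
    (hdiv : ∀ v : V, v ≠ s → d ≤ G.diversity s v) {t : V}
    (S : Finset (V ⊕ {u : V // u ≠ s})) (hs : .inl s ∈ S) (ht : .inl t ∉ S) :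
    d ≤ ((G.broadcast s).cutE S).card := by
  obtain ⟨v, hv, hmin⟩ := (wellFounded_parents hG).has_min {v | Sum.inl v ∉ S} ⟨t, ht⟩
  have hvs : v ≠ s := fun h => hv (h ▸ hs)
  have hpar (u : V) (hu : u ∈ G.parents v) : .inl u ∈ S := by
    by_contra h
    exact hmin u h hu
  -- a parent `u ≠ s` of `v` is certified in the cut either by its split edge `u → u⁺` or by an
  -- edge `u⁺ → v`; an edge `s → v` certifies itself
  let certified : E ⊕ {u : V // u ≠ s} → V ⊕ E :=
    Sum.elim (fun e => if G.tail e = s then .inr e else .inl (G.tail e)) (fun u => .inl u.1)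
  have hsurj : Set.SurjOn certified ((G.broadcast s).cutE S)
      ((Finset.univ.filter fun u => u ≠ s ∧ ∃ e : E, G.tail e = u ∧ G.head e = v).disjSum
        (Finset.univ.filter fun e : E => G.tail e = s ∧ G.head e = v)) := by
    rintro (u | e) hx
    · obtain ⟨hus, e, rfl, hev⟩ : u ≠ s ∧ ∃ e : E, G.tail e = u ∧ G.head e = v := by simpa using hx
      have hhead : (G.broadcast s).head (.inl e) ∉ S := by simpa [hev] using hv
      by_cases hsplit : .inr ⟨G.tail e, hus⟩ ∈ S
      · refine ⟨.inl e, mem_cutE.2 ⟨?_, hhead⟩, by simp [certified, hus]⟩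
        rwa [broadcast_tail_inl_of_ne hus]
      · exact ⟨.inr ⟨G.tail e, hus⟩, mem_cutE.2 ⟨hpar _ ⟨e, rfl, hev⟩, hsplit⟩, rfl⟩
    · obtain ⟨hes, hev⟩ : G.tail e = s ∧ G.head e = v := by simpa using hx
      refine ⟨.inl e, mem_cutE.2 ⟨?_, by simpa [hev] using hv⟩, by simp [certified, hes]⟩
      rwa [broadcast_tail_inl_of_eq hes]
  calc d ≤ G.diversity s v := hdiv v hvs
    _ = _ := (Finset.card_disjSum _ _).symm
    _ ≤ _ := Finset.card_le_card_of_surjOn certified hsurj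

theorem hasIntDisjoint_of_le_diversity [Fintype V] [Fintype E] (hG : G.Acyclic) {d : ℕ}
    (hdiv : ∀ v : V, v ≠ s → d ≤ G.diversity s v) {t : V} (hts : t ≠ s) :
    G.HasIntDisjoint s t d := by
  obtain ⟨P, hP⟩ := hasEdgeDisjoint_of_le_card_cutE (broadcast_acyclic hG)
    (fun h => hts (Sum.inl_injective h)) fun S hs ht => le_card_cutE_broadcast hG hdiv S hs ht
  refine ⟨fun i => (P i).unbroadcast, fun i j hij => ⟨?_, ?_⟩⟩
  · refine Set.eq_empty_iff_forall_notMem.2 fun v ⟨hi, hj⟩ => ?_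
    obtain ⟨_, hvi⟩ := (P i).mem_internals_unbroadcast hG hi
    obtain ⟨_, hvj⟩ := (P j).mem_internals_unbroadcast hG hj
    exact (hP i j hij).subset ⟨hvi, hvj⟩
  · exact Set.eq_empty_iff_forall_notMem.2 fun e ⟨hi, hj⟩ =>
      (hP i j hij).subset ⟨Walk.mem_unbroadcast_edges.1 hi, Walk.mem_unbroadcast_edges.1 hj⟩

end Broadcast

end Multigraph

/-- In an acyclic multigraph where all non-source vertices have
diversity at least `d` and some `t ≠ s` has in-degree exactly `d`, the
minimum `s,t`-edge cut size equals `d` and the maximum number of pairwise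
internally-disjoint `s`-`t` paths equals `d`. -/
theorem stmt5 {V E : Type} [Fintype V] [Fintype E] [DecidableEq V]
    (G : Multigraph V E) (s : V) (hacyc : G.Acyclic) (d : ℕ)
    (hdiv : ∀ v : V, v ≠ s → d ≤ G.diversity s v)
    (t : V) (hts : t ≠ s) (hdeg : G.indeg t = d) :
    ((∃ S : Finset V, s ∈ S ∧ t ∉ S ∧ (G.cutE S).card = d) ∧
      (∀ S : Finset V, s ∈ S → t ∉ S → d ≤ (G.cutE S).card)) ∧
    (G.HasIntDisjoint s t d ∧ ∀ n, G.HasIntDisjoint s t n → n ≤ d) := by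
  have hpaths : G.HasIntDisjoint s t d := G.hasIntDisjoint_of_le_diversity hacyc hdiv hts
  have hs : s ∈ Finset.univ.erase t := Finset.mem_erase.2 ⟨hts.symm, Finset.mem_univ s⟩
  have ht : t ∉ Finset.univ.erase t := Finset.notMem_erase t _
  have hcard : (G.cutE (Finset.univ.erase t)).card = d := by
    rw [G.cutE_univ_erase hacyc t, ← hdeg]
    rfl
  refine ⟨⟨⟨_, hs, ht, hcard⟩, fun S hs ht => hpaths.hasEdgeDisjoint.le_card_cutE hs ht⟩,
    hpaths, fun n hn => ?_⟩
  simpa [hcard] using hn.hasEdgeDisjoint.le_card_cutE hs ht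
end

section
/- Let G be a directed multigraph, s, t distinct vertices with no edge from s to t, and A a minimal s,t-vertex cut. Let A_s be the set of vertices of G − A from which it follows they lie in the component of s, and define S = A_s ∪ A. Then [S, S̄] is an s,t-edge cut and tail([S, S̄]) ⊆ A. -/
/-!
An edge leaving `S = A_s ∪ A` cannot start in `A_s`: a walk from `s` avoiding `A`, extended by
that edge, would reach its head, which is outside `A`, so the head would lie in `A_s ⊆ S`.
And `t ∉ S` because a walk from `s` to `t` avoiding `A` would contradict that `A` is a cut.
-/

namespace Multigraph

variable {V E : Type} {G : Multigraph V E} {s t : V}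

def Walk.single_s12 (G : Multigraph V E) (e : E) : G.Walk (G.tail e) (G.head e) where
  edges := [e]
  ne := List.cons_ne_nil e []
  first := rfl
  last := rfl
  chain := List.isChain_singleton e

def Walk.snoc_s12 (w : G.Walk s t) (e : E) (he : G.tail e = t) : G.Walk s (G.head e) where
  edges := w.edges ++ [e]
  ne := by simp
  first := by rw [List.head_append_of_ne_nil w.ne, w.first]
  last := by simp
  chain := by
    refine List.isChain_append.2 ⟨w.chain, List.isChain_singleton e, ?_⟩
    rintro x hx y ⟨⟩
    obtain rfl := Option.some_injective _ ((List.getLast?_eq_some_getLast w.ne).symm.trans hx)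
    rw [w.last, he]

namespace Walk

@[simp]
lemma vertexSet_single (e : E) : (single_s12 G e).vertexSet = {G.tail e, G.head e} := by
  ext x
  simp [vertexSet, single_s12, eq_comm]

@[simp]
lemma vertexSet_snoc (w : G.Walk s t) (e : E) (he : G.tail e = t) :
    (w.snoc_s12 e he).vertexSet = insert (G.head e) w.vertexSet := by
  ext x
  simp only [vertexSet, snoc_s12, List.mem_append, List.mem_singleton, Set.mem_ofPred_eq,
    Set.mem_insert_iff]
  constructor
  · rintro (rfl | ⟨f, hf | rfl, rfl⟩)
    exacts [Or.inr (Or.inl rfl), Or.inr (Or.inr ⟨f, hf, rfl⟩), Or.inl rfl]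
  · rintro (rfl | rfl | ⟨f, hf, rfl⟩)
    exacts [Or.inr ⟨e, Or.inr rfl, rfl⟩, Or.inl rfl, Or.inr ⟨f, Or.inl hf, rfl⟩]

end Walk

lemma ReachAvoid.head_of_tail {A : Set V} {e : E} (hsA : s ∉ A)
    (htail : G.ReachAvoid A s (G.tail e)) (hhead : G.head e ∉ A) : G.ReachAvoid A s (G.head e) := by
  refine Or.inr ?_
  rcases htail with hs | ⟨w, hw⟩
  · subst hs
    exact ⟨Walk.single_s12 G e, by simpa [hsA] using hhead⟩
  · exact ⟨w.snoc_s12 e rfl, by simpa [hhead] using hw⟩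

lemma IsVertexCut.not_reachAvoid {A : Set V} (hcut : G.IsVertexCut s t A) (hst : s ≠ t) :
    ¬G.ReachAvoid A s t := by
  rintro (rfl | ⟨w, hw⟩)
  · exact hst rfl
  · obtain ⟨v, hv, hvA⟩ := hcut.2.2 w
    exact hw v hv hvA

end Multigraph

theorem stmt12_general {V E : Type}
    (G : Multigraph V E) (s t : V) (hst : s ≠ t)
    (A : Set V) (hcut : G.IsVertexCut s t A) :
    s ∈ ({v | G.ReachAvoid A s v} ∪ A) ∧
    t ∉ ({v | G.ReachAvoid A s v} ∪ A) ∧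
    ∀ e : E, G.tail e ∈ ({v | G.ReachAvoid A s v} ∪ A) →
      G.head e ∉ ({v | G.ReachAvoid A s v} ∪ A) → G.tail e ∈ A := by
  refine ⟨Or.inl (Or.inl rfl), ?_, ?_⟩
  · rintro (ht | ht)
    exacts [hcut.not_reachAvoid hst ht, hcut.2.1 ht]
  · rintro e (htail | htail) hhead
    · simp only [Set.mem_union, Set.mem_ofPred_eq, not_or] at hhead
      exact absurd (htail.head_of_tail hcut.1 hhead.2) hhead.1
    · exact htail

/-- If `A` is a minimal `s,t`-vertex cut, `A_s` the set of
vertices reachable from `s` in `G − A`, and `S = A_s ∪ A`, then `[S,S̄]` is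
an `s,t`-edge cut and `tail([S,S̄]) ⊆ A`. -/
theorem stmt12 {V E : Type}
    (G : Multigraph V E) (s t : V) (hst : s ≠ t) (hna : G.Nonadjacent s t)
    (A : Set V) (hcut : G.IsVertexCut s t A)
    (hmin : ∀ B ⊆ A, G.IsVertexCut s t B → B = A) :
    s ∈ ({v | G.ReachAvoid A s v} ∪ A) ∧
    t ∉ ({v | G.ReachAvoid A s v} ∪ A) ∧
    ∀ e : E, G.tail e ∈ ({v | G.ReachAvoid A s v} ∪ A) →
      G.head e ∉ ({v | G.ReachAvoid A s v} ∪ A) → G.tail e ∈ A :=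
  stmt12_general G s t hst A hcut
end
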